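/- arXiv:1812.03747 — 2 statements merged into one kernel-verified Lean document; each statement's English description precedes it below -/
import Mathlib

section
/- Let Φ be a T-gain graph with underlying graph G. Then the spectral radius σ = max_i |λ_i(A(Φ))| satisfies σ ≥ (1/√2) · max_{i<j} sqrt( d_i + d_j + sqrt( (d_i - d_j)^2 + 4 |a_{ij}^{(2)}|^2 ) ), where a_{ij}^{(2)} is the (i,j) entry of A(Φ)^2 and d_i, d_j are the degrees of v_i, v_j. -/
open scoped Classical

variable {V : Type*}

/-- The adjacency matrix of a `𝕋`-gain graph `Φ = (G, φ)`. -/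
noncomputable def gainAdj [Fintype V] (G : SimpleGraph V) (φ : V → V → ℂ) :
    Matrix V V ℂ := fun i j => if G.Adj i j then φ i j else 0

/-- `φ` is a complex unit gain function on `G`: each gain is a unit complex number and
`φ(e_{ji}) = φ(e_{ij})⁻¹`. -/
def IsGain (G : SimpleGraph V) (φ : V → V → ℂ) : Prop :=
  (∀ i j, G.Adj i j → ‖φ i j‖ = 1) ∧ (∀ i j, G.Adj i j → φ i j * φ j i = 1)

/-- The gain of a walk: the product of the gains of its (oriented) edges. -/
noncomputable def walkGain (φ : V → V → ℂ) {G : SimpleGraph V} {u v : V} (p : G.Walk u v) : ℂ :=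
  (p.darts.map (fun d => φ d.toProd.1 d.toProd.2)).prod

/-- A gain graph is balanced if every cycle has gain `1`. -/
def IsBalanced (G : SimpleGraph V) (φ : V → V → ℂ) : Prop :=
  ∀ (v : V) (p : G.Walk v v), p.IsCycle → walkGain φ p = 1

/-- `Σ_{C ∈ C_i(G)} Re(φ(C))`: each unoriented, unrooted cycle of length `i` corresponds to
exactly `2·i` rooted oriented cycle walks, all having the same real part of the gain. -/
noncomputable def cycleRSum (G : SimpleGraph V) (φ : V → V → ℂ) (i : ℕ) : ℝ :=
  (∑ᶠ q : {q : Σ' v : V, G.Walk v v // q.snd.IsCycle ∧ q.snd.length = i},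
      (walkGain φ q.1.snd).re) / (2 * i)

open Matrix
open scoped ComplexOrder

/-! The diagonal entries of `A(Φ)²` are the degrees. If `s ≥ λₜ²` for every eigenvalue, then
`s • 1 - A(Φ)²` is positive semidefinite, hence so is its principal `2 × 2` submatrix on `{i, j}`;
its nonnegative diagonal and determinant `(s - dᵢ)(s - dⱼ) - |a⁽²⁾ᵢⱼ|²` say that the larger eigenvalue
`(dᵢ + dⱼ + √((dᵢ - dⱼ)² + 4|a⁽²⁾ᵢⱼ|²)) / 2` of `[[dᵢ, a⁽²⁾ᵢⱼ], [conj a⁽²⁾ᵢⱼ, dⱼ]]` is at most `s`. -/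

section Spectral

variable {n 𝕜 : Type*} [RCLike 𝕜]

lemma Matrix.IsHermitian.posSemidef_smul_one_sub_mul_self [Fintype n] [DecidableEq n]
    {A : Matrix n n 𝕜} (hA : A.IsHermitian) {s : ℝ} (hs : ∀ t, hA.eigenvalues t ^ 2 ≤ s) :
    ((s : 𝕜) • 1 - A * A).PosSemidef := by
  have hdiag : (diagonal fun t => ((s - hA.eigenvalues t ^ 2 : ℝ) : 𝕜)).PosSemidef :=
    PosSemidef.diagonal fun t => RCLike.ofReal_nonneg.mpr (sub_nonneg.mpr (hs t))
  have hconj : (s : 𝕜) • 1 - A * A = Unitary.conjStarAlgAut 𝕜 _ hA.eigenvectorUnitary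
      (diagonal fun t => ((s - hA.eigenvalues t ^ 2 : ℝ) : 𝕜)) := by
    conv_lhs => rw [hA.spectral_theorem]
    rw [← map_mul, ← map_one (Unitary.conjStarAlgAut 𝕜 _ hA.eigenvectorUnitary), ← map_smul,
      ← map_sub, diagonal_mul_diagonal, smul_one_eq_diagonal, diagonal_sub]
    simp [sq]
  rw [hconj, Unitary.conjStarAlgAut_apply]
  exact hdiag.mul_mul_conjTranspose_same _

lemma Matrix.PosSemidef.norm_apply_sq_le {M : Matrix n n 𝕜} (hM : M.PosSemidef) (i j : n) :
    ‖M i j‖ ^ 2 ≤ RCLike.re (M i i) * RCLike.re (M j j) := by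
  have hdet := (RCLike.nonneg_iff.mp (hM.submatrix ![i, j]).det_nonneg).1
  rw [det_fin_two] at hdet
  simp only [submatrix_apply, cons_val_zero, cons_val_one] at hdet
  rw [← hM.isHermitian.apply j i, ← hM.isHermitian.coe_re_apply_self i,
    ← hM.isHermitian.coe_re_apply_self j, RCLike.star_def, RCLike.mul_conj, ← RCLike.ofReal_pow,
    ← RCLike.ofReal_mul, ← RCLike.ofReal_sub, RCLike.ofReal_re] at hdet
  linarith

end Spectral

lemma add_add_sqrt_le_two_mul {p q r s : ℝ} (hp : p ≤ s) (hq : q ≤ s)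
    (hr : r ^ 2 ≤ (s - p) * (s - q)) : p + q + √((p - q) ^ 2 + 4 * r ^ 2) ≤ 2 * s := by
  have : √((p - q) ^ 2 + 4 * r ^ 2) ≤ 2 * s - p - q :=
    Real.sqrt_le_iff.mpr ⟨by linarith, by nlinarith⟩
  linarith

lemma one_div_sqrt_two_mul_sqrt_le_abs {x μ : ℝ} (h : x ≤ 2 * μ ^ 2) : 1 / √2 * √x ≤ |μ| :=
  calc 1 / √2 * √x = √(x / 2) := by rw [Real.sqrt_div' _ zero_le_two]; ring
    _ ≤ √(μ ^ 2) := Real.sqrt_le_sqrt (by linarith)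
    _ = |μ| := Real.sqrt_sq_eq_abs μ

lemma gainAdj_mul_self_apply_self {V : Type*} [Fintype V] {G : SimpleGraph V} [DecidableRel G.Adj]
    {φ : V → V → ℂ} (hφ : IsGain G φ) (v : V) :
    (gainAdj G φ * gainAdj G φ) v v = G.degree v := by
  have hterm : ∀ k, gainAdj G φ v k * gainAdj G φ k v = if G.Adj v k then 1 else 0 := by
    intro k
    by_cases h : G.Adj v k
    · simp [gainAdj, h, h.symm, hφ.2 v k h]
    · simp [gainAdj, h]
  rw [mul_apply, Finset.sum_congr rfl fun k _ => hterm k, Finset.sum_boole,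
    ← SimpleGraph.card_neighborFinset_eq_degree, SimpleGraph.neighborFinset_eq_filter]

/-- The spectral radius `σ = max |λ_i(A(Φ))|` satisfies, for all `i < j`,
`σ ≥ (1/√2) √( d_i + d_j + √((d_i - d_j)² + 4 |a_{ij}^{(2)}|²) )`. -/
theorem spectral_radius_degree_lower_bound {n : ℕ} (G : SimpleGraph (Fin n))
    [DecidableRel G.Adj] (φ : Fin n → Fin n → ℂ) (hφ : IsGain G φ)
    (hA : (gainAdj G φ).IsHermitian) (i j : Fin n) (hij : i ≠ j) :
    ∃ t : Fin n,
      (1 / Real.sqrt 2) *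
        Real.sqrt ((G.degree i : ℝ) + (G.degree j : ℝ) +
          Real.sqrt (((G.degree i : ℝ) - (G.degree j : ℝ)) ^ 2 +
            4 * ‖(gainAdj G φ ^ 2) i j‖ ^ 2)) ≤ |hA.eigenvalues t| := by
  obtain ⟨t, -, ht⟩ := Finset.exists_max_image Finset.univ (fun t => hA.eigenvalues t ^ 2)
    ⟨i, Finset.mem_univ i⟩
  have hM := hA.posSemidef_smul_one_sub_mul_self fun t' => ht t' (Finset.mem_univ t')
  have hdiag (v : Fin n) :
      RCLike.re ((((hA.eigenvalues t ^ 2 : ℝ) : ℂ) • 1 - gainAdj G φ * gainAdj G φ) v v) =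
        hA.eigenvalues t ^ 2 - G.degree v := by
    simp [gainAdj_mul_self_apply_self hφ, -Complex.ofReal_pow]
  have hdeg_le (v : Fin n) : (G.degree v : ℝ) ≤ hA.eigenvalues t ^ 2 :=
    sub_nonneg.mp (hdiag v ▸ (RCLike.nonneg_iff.mp hM.diag_nonneg).1)
  have hdet := hdiag i ▸ hdiag j ▸ hM.norm_apply_sq_le i j
  refine ⟨t, one_div_sqrt_two_mul_sqrt_le_abs ?_⟩
  refine add_add_sqrt_le_two_mul (hdeg_le i) (hdeg_le j) ?_
  simpa [sq (gainAdj G φ), hij] using hdet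
end

section
/- Let Φ = (G, φ) be a T-gain graph whose eigenvalues are symmetric about 0. If for every odd i the sum Σ_{C ∈ C_i(G)} Re(φ(C)) over all cycles of length i in G is nonzero whenever C_i(G) is nonempty, then G is bipartite. -/
open scoped Classical

variable {V : Type*}

/-! If `G` had an odd closed walk, pick one of minimal odd length `k`; every closed walk of
length `k` is then a cycle, because a repeated vertex would split off a shorter odd closed walk.
So `tr A(Φ)^k`, the sum of the gains of all closed walks of length `k`, has real part
`2k · Σ_{C ∈ C_k(G)} Re(φ(C))`. On the other hand `tr A(Φ)^k = Σ λᵢ^k`, which vanishes for odd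
`k` because the spectrum is symmetric about `0`. -/

open SimpleGraph

namespace SimpleGraph.Walk

variable {G : SimpleGraph V}

lemma exists_loop_of_not_isPath [DecidableEq V] {u w : V} (p : G.Walk u w) (hp : ¬ p.IsPath) :
    ∃ (x : V) (c : G.Walk x x) (q : G.Walk u w), 0 < c.length ∧ c.length + q.length = p.length := by
  induction p with
  | nil => exact absurd IsPath.nil hp
  | @cons u v w h r ih =>
    by_cases hr : r.IsPath
    · have hu : u ∈ r.support := by simpa [cons_isPath_iff, hr] using hp
      refine ⟨u, cons h (r.takeUntil u hu), r.dropUntil u hu, by simp, ?_⟩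
      have hlen := congrArg length (r.take_spec hu)
      rw [length_append] at hlen
      simp only [length_cons]
      omega
    · obtain ⟨x, c, q, hc, hlen⟩ := ih hr
      exact ⟨x, c, cons h q, hc, by simp only [length_cons]; omega⟩

lemma isCycle_of_odd_length_minimal {v : V} {p : G.Walk v v} (hodd : Odd p.length)
    (hmin : ∀ (u : V) (q : G.Walk u u), Odd q.length → p.length ≤ q.length) : p.IsCycle := by
  have hnil : ¬ p.Nil := fun h => by simp [h.length_eq_zero] at hodd
  rw [isCycle_iff_isPath_tail_and_le_length]
  constructor
  · by_contra htail
    obtain ⟨x, c, q, hc, hlen⟩ := p.tail.exists_loop_of_not_isPath htail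
    have htail_len := p.length_tail_add_one hnil
    -- either the loop `c` or the walk with `c` cut out is a shorter odd closed walk
    rcases Nat.even_or_odd c.length with heven | hodd'
    · let q' := cons (p.adj_snd hnil) q
      have hsplit : p.length = c.length + q'.length := by simp only [q', length_cons]; omega
      have := hmin v q' (Nat.odd_add'.mp (hsplit ▸ hodd) |>.mpr heven)
      omega
    · have := hmin x c hodd'
      omega
  · have h1 : p.length ≠ 1 := fun h => G.loopless.irrefl v (adj_of_length_eq_one h)
    obtain ⟨m, hm⟩ := hodd
    omega

end SimpleGraph.Walk

namespace SimpleGraph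

variable {G : SimpleGraph V}

lemma exists_odd_length_forall_isCycle {v : V} (p : G.Walk v v) (hp : Odd p.length) :
    ∃ k, Odd k ∧ (∃ (u : V) (c : G.Walk u u), c.length = k) ∧
      ∀ (u : V) (c : G.Walk u u), c.length = k → c.IsCycle := by
  have hex : ∃ k, Odd k ∧ ∃ (u : V) (c : G.Walk u u), c.length = k := ⟨_, hp, v, p, rfl⟩
  obtain ⟨hodd, hwalk⟩ := Nat.find_spec hex
  refine ⟨_, hodd, hwalk, fun u c hc => Walk.isCycle_of_odd_length_minimal (hc ▸ hodd) ?_⟩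
  exact fun w q hq => hc ▸ Nat.find_min' hex ⟨hq, w, q, rfl⟩

end SimpleGraph

lemma Finset.sum_pow_eq_zero_of_map_eq_map_neg {ι R : Type*} [Fintype ι] [Ring R]
    [IsAddTorsionFree R] {f : ι → R} (h : univ.val.map f = univ.val.map (fun i => -f i))
    {k : ℕ} (hk : Odd k) : ∑ i, f i ^ k = 0 := by
  have := congrArg (fun s => (s.map (· ^ k)).sum) h
  simp only [Multiset.map_map, Function.comp_def, hk.neg_pow] at this
  exact self_eq_neg.mp (this.trans (Multiset.sum_map_neg ..))

lemma Matrix.IsHermitian.trace_pow {𝕜 n : Type*} [RCLike 𝕜] [Fintype n] [DecidableEq n]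
    {A : Matrix n n 𝕜} (hA : A.IsHermitian) (k : ℕ) :
    (A ^ k).trace = ∑ i, (hA.eigenvalues i : 𝕜) ^ k := by
  conv_lhs => rw [hA.spectral_theorem, ← map_pow, Unitary.conjStarAlgAut_apply, trace_mul_cycle,
    Unitary.star_mul_self_of_mem hA.eigenvectorUnitary.2, Matrix.one_mul, diagonal_pow, trace_diagonal]
  simp

section GainGraph

variable {G : SimpleGraph V} {φ : V → V → ℂ}

lemma walkGain_cons {u v w : V} (h : G.Adj u v) (p : G.Walk v w) :
    walkGain φ (Walk.cons h p) = φ u v * walkGain φ p := by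
  simp [walkGain]

lemma gainAdj_pow_apply [Fintype V] [DecidableEq V] (k : ℕ) (u v : V) :
    (gainAdj G φ ^ k) u v = ∑ p ∈ G.finsetWalkLength k u v, walkGain φ p := by
  induction k generalizing u with
  | zero => obtain rfl | h := eq_or_ne u v <;> simp [finsetWalkLength, walkGain, *]
  | succ k ih =>
    rw [pow_succ', Matrix.mul_apply, finsetWalkLength, Finset.sum_biUnion]
    · simp only [Finset.sum_map, gainAdj, ite_mul, zero_mul, ← Finset.sum_filter]
      refine (Finset.sum_subtype _ (by simp) _).trans (Finset.sum_congr rfl fun w _ => ?_)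
      rw [ih, Finset.mul_sum]
      exact Finset.sum_congr rfl fun p _ => (walkGain_cons w.2 p).symm
    · rintro ⟨x, hx⟩ - ⟨y, hy⟩ - hxy
      rw [Function.onFun, Finset.disjoint_left]
      rintro p hp hp'
      simp only [Finset.mem_map] at hp hp'
      obtain ⟨px, -, rfl⟩ := hp
      obtain ⟨py, -, hp'⟩ := hp'
      cases hp'
      simp at hxy

lemma trace_gainAdj_pow [Fintype V] [DecidableEq V] (k : ℕ) :
    (gainAdj G φ ^ k).trace = ∑ u, ∑ p ∈ G.finsetWalkLength k u u, walkGain φ p := by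
  simp only [Matrix.trace, Matrix.diag, gainAdj_pow_apply]

end GainGraph

lemma SimpleGraph.finsum_cycles_eq_sum_finsetWalkLength [Fintype V] [DecidableEq V]
    {G : SimpleGraph V} {M : Type*} [AddCommMonoid M] {k : ℕ}
    (hcyc : ∀ (u : V) (c : G.Walk u u), c.length = k → c.IsCycle) (f : ∀ {u : V}, G.Walk u u → M) :
    ∑ᶠ q : {q : Σ' v : V, G.Walk v v // q.snd.IsCycle ∧ q.snd.length = k}, f q.1.snd =
      ∑ u, ∑ p ∈ G.finsetWalkLength k u u, f p := by
  let e : {q : Σ' v : V, G.Walk v v // q.snd.IsCycle ∧ q.snd.length = k} ≃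
      Σ u : V, G.finsetWalkLength k u u :=
    { toFun q := ⟨q.1.1, q.1.2, mem_finsetWalkLength_iff.mpr q.2.2⟩
      invFun q := ⟨⟨q.1, q.2⟩, hcyc _ _ (mem_finsetWalkLength_iff.mp q.2.2),
        mem_finsetWalkLength_iff.mp q.2.2⟩
      left_inv _ := rfl
      right_inv _ := rfl }
  rw [← finsum_comp_equiv e.symm, finsum_eq_sum_of_fintype, Fintype.sum_sigma]
  exact Finset.sum_congr rfl fun u _ => Finset.sum_coe_sort _ (fun p => f p)

theorem symmetric_spectrum_bipartite_general {n : ℕ} (G : SimpleGraph (Fin n))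
    (φ : Fin n → Fin n → ℂ) (hA : (gainAdj G φ).IsHermitian)
    (hsym : Finset.univ.val.map hA.eigenvalues =
      Finset.univ.val.map (fun i => -hA.eigenvalues i))
    (hcyc : ∀ i : ℕ, Odd i →
      (∃ q : Σ' v : Fin n, G.Walk v v, q.snd.IsCycle ∧ q.snd.length = i) →
      cycleRSum G φ i ≠ 0) :
    G.Colorable 2 := by
  refine two_colorable_iff_forall_loop_even.mpr fun v p => Nat.not_odd_iff_even.mp fun hp => ?_
  obtain ⟨k, hk, ⟨u, c, hc⟩, hcycles⟩ := exists_odd_length_forall_isCycle p hp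
  refine hcyc k hk ⟨⟨u, c⟩, hcycles u c hc, hc⟩ ?_
  have htrace : (gainAdj G φ ^ k).trace = 0 := by
    rw [hA.trace_pow, ← Complex.ofReal_eq_zero.mpr (Finset.sum_pow_eq_zero_of_map_eq_map_neg hsym hk)]
    push_cast
    rfl
  rw [cycleRSum, finsum_cycles_eq_sum_finsetWalkLength hcycles (fun p => (walkGain φ p).re)]
  simp only [← Complex.re_sum, ← trace_gainAdj_pow, htrace, Complex.zero_re, zero_div]

/-- Suppose the eigenvalues of `A(Φ)` are symmetric about `0`. If for every
odd `i` the sum `Σ_{C ∈ C_i(G)} Re(φ(C))` is nonzero whenever `G` has a cycle of length `i`,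
then `G` is bipartite. -/
theorem symmetric_spectrum_bipartite {n : ℕ} (G : SimpleGraph (Fin n))
    (φ : Fin n → Fin n → ℂ) (hφ : IsGain G φ) (hA : (gainAdj G φ).IsHermitian)
    (hsym : Finset.univ.val.map hA.eigenvalues =
      Finset.univ.val.map (fun i => -hA.eigenvalues i))
    (hcyc : ∀ i : ℕ, Odd i →
      (∃ q : Σ' v : Fin n, G.Walk v v, q.snd.IsCycle ∧ q.snd.length = i) →
      cycleRSum G φ i ≠ 0) :
    G.Colorable 2 :=
  symmetric_spectrum_bipartite_general G φ hA hsym hcyc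
end
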